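/- Let C be a commutative star ring in which 2 is invertible, A a unital *-algebra over C, and qA = (A[[λ]], ⋆) a Hermitian formal deformation of A. Then every unitary U_0 ∈ M_n(A) (i.e. U_0* U_0 = U_0 U_0* = 1) can be deformed into a unitary of the deformed matrix algebra: there exist U_r ∈ M_n(A) for r ≥ 1 such that U = U_0 + Σ_{r≥1} U_r λ^r satisfies U* ⋆ U = U ⋆ U* = 1 in M_n(A)[[λ]]. -/

import Mathlib

open scoped Matrix

/-- Cauchy-type convolution of two formal series along a family of
coefficient maps `B r : M → N → P`:  `(x ⋆ y) n = ∑_{r+i+j=n} B r (x i) (y j)`. -/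
def fdConv {M N P : Type*} [AddCommMonoid P] (B : ℕ → M → N → P)
    (x : ℕ → M) (y : ℕ → N) : ℕ → P := fun n =>
  ∑ p ∈ Finset.HasAntidiagonal.antidiagonal n, ∑ q ∈ Finset.HasAntidiagonal.antidiagonal p.2, B p.1 (x q.1) (y q.2)

/-- The unit formal series `1 + 0·λ + 0·λ² + ⋯`. -/
def fdOne (A : Type*) [One A] [Zero A] : ℕ → A := fun n => if n = 0 then 1 else 0

/-- An element viewed as a constant (order-zero) formal series. -/
def fdC {A : Type*} [Zero A] (a : A) : ℕ → A := fun n => if n = 0 then a else 0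

/-- Coefficientwise star of a formal series. -/
def fdStar {A : Type*} [Star A] (x : ℕ → A) : ℕ → A := fun n => star (x n)

/-- Action of a scalar series `c ∈ k[[λ]]` on series with coefficients in a `k`-module. -/
def fdSmul {k M : Type*} [Semiring k] [AddCommMonoid M] [Module k M]
    (c : ℕ → k) (x : ℕ → M) : ℕ → M := fun n =>
  ∑ p ∈ Finset.HasAntidiagonal.antidiagonal n, c p.1 • x p.2

/-- Order-by-order extension of a family of maps `T r : E → F` to formal series:
`(T x) n = ∑_{r+j=n} T r (x j)`. -/
def fdMap {E F : Type*} [AddCommMonoid F] (T : ℕ → E → F) (x : ℕ → E) : ℕ → F :=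
  fun n => ∑ p ∈ Finset.HasAntidiagonal.antidiagonal n, T p.1 (x p.2)

/-- A formal deformation (à la Gerstenhaber) of a unital `k`-algebra `A`:
a family of `k`-bilinear cochains `C r` with `C 0` the original product, whose
convolution product on `A[[λ]]` is associative and unital (with the same unit). -/
structure FormalDeformation (k A : Type*) [CommRing k] [Ring A] [Algebra k A] where
  C : ℕ → A →ₗ[k] A →ₗ[k] A
  C_zero : ∀ a b : A, C 0 a b = a * b
  assoc : ∀ x y z : ℕ → A,
    fdConv (fun r a b => C r a b) (fdConv (fun r a b => C r a b) x y) z =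
      fdConv (fun r a b => C r a b) x (fdConv (fun r a b => C r a b) y z)
  one_mul : ∀ x : ℕ → A, fdConv (fun r a b => C r a b) (fdOne A) x = x
  mul_one : ∀ x : ℕ → A, fdConv (fun r a b => C r a b) x (fdOne A) = x

namespace FormalDeformation

variable {k A : Type*} [CommRing k] [Ring A] [Algebra k A]

/-- The deformed product on `A[[λ]]`. -/
def mul (D : FormalDeformation k A) : (ℕ → A) → (ℕ → A) → ℕ → A :=
  fdConv fun r a b => D.C r a b

/-- A deformation of a `*`-algebra is Hermitian if the coefficientwise extension of
the involution is still an involution for the deformed product. -/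
def IsHermitian [StarRing A] (D : FormalDeformation k A) : Prop :=
  ∀ x y : ℕ → A, fdStar (D.mul x y) = D.mul (fdStar y) (fdStar x)

/-- The extension of the deformation cochains to matrices. -/
def matC (D : FormalDeformation k A) (n : ℕ) (r : ℕ)
    (L S : Matrix (Fin n) (Fin n) A) : Matrix (Fin n) (Fin n) A :=
  Matrix.of fun i j => ∑ s, D.C r (L i s) (S s j)

/-- The deformed product on `M_n(A)[[λ]] = M_n(A[[λ]])`. -/
def matMul (D : FormalDeformation k A) (n : ℕ) :
    (ℕ → Matrix (Fin n) (Fin n) A) → (ℕ → Matrix (Fin n) (Fin n) A) →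
      ℕ → Matrix (Fin n) (Fin n) A :=
  fdConv (D.matC n)

/-- The deformed left action of `M_n(A)[[λ]]` on column vectors `A^n[[λ]]`. -/
def mvMul (D : FormalDeformation k A) (n : ℕ) :
    (ℕ → Matrix (Fin n) (Fin n) A) → (ℕ → Fin n → A) → ℕ → Fin n → A :=
  fdConv fun r L v => fun i => ∑ j, D.C r (L i j) (v j)

/-- The deformed right action of `A[[λ]]` on column vectors `A^n[[λ]]`. -/
def vsMul (D : FormalDeformation k A) (n : ℕ) :
    (ℕ → Fin n → A) → (ℕ → A) → ℕ → Fin n → A :=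
  fdConv fun r v a => fun i => D.C r (v i) a

end FormalDeformation

/-!
The unitary is built order by order. Once `U₀, …, U_{m-1}` are chosen, the coefficient of `λ^m`
in `U* ⋆ U` is `E + U_m* U₀ + U₀* U_m`, where `E` only involves lower orders and is self-adjoint
because the deformation is Hermitian; `U_m = -U₀ E / 2` makes it vanish. So `U*` is a left
`⋆`-inverse of `U`. Since `U₀` is invertible, the same kind of recursion gives `U` a right
`⋆`-inverse, and by associativity the two coincide, so `U ⋆ U* = 1` as well.
-/

open Finset

theorem exists_seq_forall_eq_of_congr {M : Type*} [Nonempty M] {f : ℕ → (ℕ → M) → M}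
    (hf : ∀ m x y, (∀ k < m, x k = y k) → f m x = f m y) : ∃ x : ℕ → M, ∀ m, x m = f m x := by
  let x : ℕ → M := Nat.strongRec fun m prev =>
    f m fun k => if h : k < m then prev k h else Classical.arbitrary M
  refine ⟨x, fun m => ?_⟩
  rw [show x m = _ from Nat.strongRec_eq _ m]
  exact hf m _ _ fun k hk => by simp [hk, x]

section Convolution

variable {M N P : Type*} [AddCommMonoid P] (B : ℕ → M → N → P)

def fdConvLower (x : ℕ → M) (y : ℕ → N) (m : ℕ) : P :=
  ∑ p ∈ antidiagonal m, ∑ q ∈ antidiagonal p.2,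
    if q.1 < m ∧ q.2 < m then B p.1 (x q.1) (y q.2) else 0

theorem fdConv_zero_apply (x : ℕ → M) (y : ℕ → N) : fdConv B x y 0 = B 0 (x 0) (y 0) := by
  simp [fdConv]

theorem fdConv_apply_of_ne_zero (x : ℕ → M) (y : ℕ → N) {m : ℕ} (hm : m ≠ 0) :
    fdConv B x y m = fdConvLower B x y m + (B 0 (x m) (y 0) + B 0 (x 0) (y m)) := by
  have hsplit : fdConv B x y m = fdConvLower B x y m + ∑ p ∈ antidiagonal m,
      ∑ q ∈ antidiagonal p.2, if q.1 < m ∧ q.2 < m then 0 else B p.1 (x q.1) (y q.2) := by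
    simp only [fdConv, fdConvLower, ← sum_add_distrib]
    refine sum_congr rfl fun p _ => sum_congr rfl fun q _ => ?_
    split_ifs <;> simp
  rw [hsplit, sum_eq_single_of_mem (0, m) (by simp) ?_]
  · rw [sum_eq_add_of_mem (m, 0) (0, m) (by simp) (by simp) (by simp [hm])]
    · simp [Nat.pos_of_ne_zero hm]
    · intro q hq hne
      rw [HasAntidiagonal.mem_antidiagonal] at hq
      rw [if_pos (by simp only [Ne, Prod.ext_iff] at hne; omega)]
  · intro p hp hne
    rw [HasAntidiagonal.mem_antidiagonal] at hp
    refine sum_eq_zero fun q hq => if_pos ?_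
    rw [HasAntidiagonal.mem_antidiagonal] at hq
    simp only [Ne, Prod.ext_iff] at hne
    omega

variable {B}

theorem fdConvLower_congr {x x' : ℕ → M} {y y' : ℕ → N} {m : ℕ}
    (hx : ∀ k < m, x k = x' k) (hy : ∀ k < m, y k = y' k) :
    fdConvLower B x y m = fdConvLower B x' y' m := by
  refine sum_congr rfl fun p _ => sum_congr rfl fun q _ => ?_
  split_ifs with h
  · rw [hx _ h.1, hy _ h.2]
  · rfl

theorem isSelfAdjoint_fdConvLower_fdStar {R : Type*} [AddCommMonoid R] [StarAddMonoid R]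
    {B : ℕ → R → R → R} (hB : ∀ r a b, star (B r a b) = B r (star b) (star a))
    (u : ℕ → R) (m : ℕ) : IsSelfAdjoint (fdConvLower B (fdStar u) u m) := by
  simp only [IsSelfAdjoint, fdConvLower, star_sum, apply_ite star, star_zero, hB, fdStar,
    star_star]
  refine sum_congr rfl fun p _ => ?_
  rw [← Nat.sum_antidiagonal_swap]
  simp only [Prod.fst_swap, Prod.snd_swap, and_comm]

end Convolution

section Ring

variable {R : Type*} [Ring R] {B : ℕ → R → R → R} (hB₀ : ∀ a b, B 0 a b = a * b)
include hB₀

theorem exists_fdConv_eq_fdOne_of_mul_eq_one (x : ℕ → R) {w : R} (hw : x 0 * w = 1) :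
    ∃ y, fdConv B x y = fdOne R := by
  obtain ⟨y, hy⟩ : ∃ y : ℕ → R, ∀ m,
      y m = if m = 0 then w else -(w * (fdConvLower B x y m + x m * y 0)) :=
    exists_seq_forall_eq_of_congr fun m y y' h => by
      by_cases hm : m = 0
      · simp only [hm, if_true]
      · simp only [if_neg hm, fdConvLower_congr (fun _ _ => rfl) h, h 0 (Nat.pos_of_ne_zero hm)]
  have hy₀ : y 0 = w := by simpa using hy 0
  refine ⟨y, funext fun m => ?_⟩
  rcases eq_or_ne m 0 with rfl | hm
  · simp [fdConv_zero_apply, hB₀, hy₀, hw, fdOne]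
  · rw [fdConv_apply_of_ne_zero B x y hm, hB₀, hB₀, hy m, if_neg hm, hy₀, mul_neg,
      ← mul_assoc, hw, one_mul]
    simp [fdOne, hm]

end Ring

section StarRing

variable {R : Type*} [Ring R] [StarRing R] [Invertible (2 : R)]

theorem star_invOf_two : star (⅟2 : R) = ⅟2 := by
  have h := congrArg star (invOf_mul_self (2 : R))
  rw [star_mul, star_ofNat, star_one] at h
  exact (invOf_eq_right_inv h).symm

variable {B : ℕ → R → R → R} (hB₀ : ∀ a b, B 0 a b = a * b)
  (hB_star : ∀ r a b, star (B r a b) = B r (star b) (star a))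
include hB₀ hB_star

theorem exists_fdConv_fdStar_self_eq_fdOne {u₀ : R} (hu₀ : star u₀ * u₀ = 1) :
    ∃ u : ℕ → R, u 0 = u₀ ∧ fdConv B (fdStar u) u = fdOne R := by
  obtain ⟨u, hu⟩ : ∃ u : ℕ → R, ∀ m,
      u m = if m = 0 then u₀ else -(u₀ * fdConvLower B (fdStar u) u m * ⅟2) :=
    exists_seq_forall_eq_of_congr fun m u u' h => by
      rw [fdConvLower_congr (x := fdStar u) (x' := fdStar u')
        (fun k hk => congrArg star (h k hk)) h]
  have hu0 : u 0 = u₀ := by simpa using hu 0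
  refine ⟨u, hu0, funext fun m => ?_⟩
  rcases eq_or_ne m 0 with rfl | hm
  · simp [fdConv_zero_apply, hB₀, fdStar, hu0, hu₀, fdOne]
  have hu₀' : ∀ a, star u₀ * (u₀ * a) = a := fun a => by rw [← mul_assoc, hu₀, one_mul]
  rw [fdConv_apply_of_ne_zero B _ u hm, hB₀, hB₀, fdStar, fdStar, hu0, hu m, if_neg hm]
  set E := fdConvLower B (fdStar u) u m
  have hE : star E = E := isSelfAdjoint_fdConvLower_fdStar hB_star u m
  have h2E : E * ⅟2 = ⅟2 * E := ((Commute.ofNat_left 2 E).invOf_left).eq.symm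
  simp only [star_neg, star_mul, hE, star_invOf_two, mul_neg, neg_mul, mul_assoc, hu₀, hu₀',
    mul_one]
  rw [h2E, ← neg_add, ← add_mul, invOf_two_add_invOf_two, one_mul]
  simp [fdOne, hm]

theorem exists_unitary_lift
    (h_assoc : ∀ x y z, fdConv B (fdConv B x y) z = fdConv B x (fdConv B y z))
    (h_one_left : ∀ x, fdConv B (fdOne R) x = x) (h_one_right : ∀ x, fdConv B x (fdOne R) = x)
    {u₀ : R} (hu₀ : star u₀ * u₀ = 1) (hu₀' : u₀ * star u₀ = 1) :
    ∃ u : ℕ → R, u 0 = u₀ ∧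
      fdConv B (fdStar u) u = fdOne R ∧ fdConv B u (fdStar u) = fdOne R := by
  obtain ⟨u, hu0, h_left⟩ := exists_fdConv_fdStar_self_eq_fdOne hB₀ hB_star hu₀
  obtain ⟨v, h_right⟩ :=
    exists_fdConv_eq_fdOne_of_mul_eq_one hB₀ u (w := star u₀) (hu0 ▸ hu₀')
  have h_inv : fdStar u = v := calc
    fdStar u = fdConv B (fdStar u) (fdConv B u v) := by rw [h_right, h_one_right]
    _ = v := by rw [← h_assoc, h_left, h_one_left]
  exact ⟨u, hu0, h_left, h_inv ▸ h_right⟩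

end StarRing

theorem seq_matrix_ext {ι κ α : Type*} {X Y : ℕ → Matrix ι κ α}
    (h : ∀ i j, (fun m => X m i j) = fun m => Y m i j) : X = Y :=
  funext fun m => Matrix.ext fun i j => congrFun (h i j) m

namespace FormalDeformation

variable {k A : Type*} [CommRing k] [Ring A] [Algebra k A] (D : FormalDeformation k A)

theorem mul_fdC_fdC (a b : A) (m : ℕ) : D.mul (fdC a) (fdC b) m = D.C m a b := by
  have hC : ∀ r (q : ℕ × ℕ),
      D.C r (fdC a q.1) (fdC b q.2) = if q = 0 then D.C r a b else 0 := by
    rintro r ⟨i, j⟩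
    by_cases hi : i = 0 <;> by_cases hj : j = 0 <;> simp [fdC, hi, hj]
  simp only [mul, fdConv, hC, sum_ite_eq']
  rw [sum_eq_single_of_mem (m, 0) (by simp)]
  · simp [Prod.ext_iff]
  · rintro ⟨i, j⟩ hp hne
    simp only [HasAntidiagonal.mem_antidiagonal, ne_eq, Prod.ext_iff] at hp hne
    refine if_neg ?_
    simp only [HasAntidiagonal.mem_antidiagonal, Prod.fst_zero, Prod.snd_zero]
    omega

variable {D} in
theorem IsHermitian.star_C [StarRing A] (hD : D.IsHermitian) (r : ℕ) (a b : A) :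
    star (D.C r a b) = D.C r (star b) (star a) := by
  have hstar : ∀ c : A, fdStar (fdC c) = fdC (star c) := fun c => by
    funext i
    by_cases hi : i = 0 <;> simp [fdStar, fdC, hi]
  simpa [fdStar, hstar, mul_fdC_fdC] using congrFun (hD (fdC a) (fdC b)) r

theorem sum_mul {ι : Type*} (s : Finset ι) (x : ι → ℕ → A) (y : ℕ → A) :
    D.mul (∑ t ∈ s, x t) y = ∑ t ∈ s, D.mul (x t) y := by
  funext m
  simp only [mul, fdConv, Finset.sum_apply, map_sum, LinearMap.coe_sum]
  rw [sum_comm]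
  exact sum_congr rfl fun _ _ => sum_comm

theorem mul_sum {ι : Type*} (s : Finset ι) (x : ℕ → A) (y : ι → ℕ → A) :
    D.mul x (∑ t ∈ s, y t) = ∑ t ∈ s, D.mul x (y t) := by
  funext m
  simp only [mul, fdConv, Finset.sum_apply, map_sum]
  rw [sum_comm]
  exact sum_congr rfl fun _ _ => sum_comm

@[simp]
theorem zero_mul (y : ℕ → A) : D.mul 0 y = 0 := by
  funext m
  simp [mul, fdConv]

@[simp]
theorem mul_zero (x : ℕ → A) : D.mul x 0 = 0 := by
  funext m
  simp [mul, fdConv]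

variable (n : ℕ)

theorem matC_zero (L S : Matrix (Fin n) (Fin n) A) : D.matC n 0 L S = L * S := by
  ext i j
  simp [matC, D.C_zero, Matrix.mul_apply]

variable {D} in
theorem IsHermitian.star_matC [StarRing A] (hD : D.IsHermitian) (r : ℕ)
    (L S : Matrix (Fin n) (Fin n) A) : star (D.matC n r L S) = D.matC n r (star S) (star L) := by
  ext i j
  simp only [Matrix.star_apply, matC, Matrix.of_apply, star_sum, hD.star_C]

theorem matMul_entry (X Y : ℕ → Matrix (Fin n) (Fin n) A) (i j : Fin n) :
    (fun m => D.matMul n X Y m i j) = ∑ s, D.mul (fun m => X m i s) (fun m => Y m s j) := by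
  funext m
  simp only [matMul, mul, fdConv, matC, Matrix.sum_apply, Matrix.of_apply, Finset.sum_apply]
  rw [sum_comm]
  exact sum_congr rfl fun _ _ => sum_comm

theorem fdOne_entry (i j : Fin n) :
    (fun m => fdOne (Matrix (Fin n) (Fin n) A) m i j) = if i = j then fdOne A else 0 := by
  funext m
  by_cases hm : m = 0 <;> by_cases hij : i = j <;> simp [fdOne, Matrix.one_apply, hm, hij]

theorem matMul_assoc (X Y Z : ℕ → Matrix (Fin n) (Fin n) A) :
    D.matMul n (D.matMul n X Y) Z = D.matMul n X (D.matMul n Y Z) := by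
  refine seq_matrix_ext fun i j => ?_
  simp only [matMul_entry, D.sum_mul, D.mul_sum]
  rw [sum_comm]
  exact sum_congr rfl fun _ _ => sum_congr rfl fun _ _ => D.assoc _ _ _

theorem one_matMul (X : ℕ → Matrix (Fin n) (Fin n) A) :
    D.matMul n (fdOne _) X = X := by
  refine seq_matrix_ext fun i j => ?_
  rw [matMul_entry, sum_eq_single i (fun s _ hs => by simp [fdOne_entry, Ne.symm hs]) (by simp)]
  simp only [fdOne_entry, if_true]
  exact D.one_mul _

theorem matMul_one (X : ℕ → Matrix (Fin n) (Fin n) A) :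
    D.matMul n X (fdOne _) = X := by
  refine seq_matrix_ext fun i j => ?_
  rw [matMul_entry, sum_eq_single j (fun s _ hs => by simp [fdOne_entry, hs]) (by simp)]
  simp only [fdOne_entry, if_true]
  exact D.mul_one _

end FormalDeformation

theorem unitary_deformation_general {C A : Type*} [CommRing C]
    [Invertible (2 : C)] [Ring A] [Algebra C A] [StarRing A]
    (D : FormalDeformation C A) (hD : D.IsHermitian) (n : ℕ)
    (U₀ : Matrix (Fin n) (Fin n) A)
    (hU₀left : U₀ᴴ * U₀ = 1) (hU₀right : U₀ * U₀ᴴ = 1) :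
    ∃ U : ℕ → Matrix (Fin n) (Fin n) A, U 0 = U₀ ∧
      D.matMul n (fun m => (U m)ᴴ) U = fdOne (Matrix (Fin n) (Fin n) A) ∧
      D.matMul n U (fun m => (U m)ᴴ) = fdOne (Matrix (Fin n) (Fin n) A) := by
  let : Invertible (2 : Matrix (Fin n) (Fin n) A) :=
    (Invertible.map (algebraMap C _) 2).copy 2 (map_ofNat _ 2).symm
  exact exists_unitary_lift (D.matC_zero n) (hD.star_matC n) (D.matMul_assoc n)
    (D.one_matMul n) (D.matMul_one n) hU₀left hU₀right

/-- Every unitary `U₀ ∈ Mₙ(A)` can be deformed into a unitary of the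
deformed matrix algebra `Mₙ(qA)`. -/
theorem unitary_deformation {C A : Type*} [CommRing C] [StarRing C]
    [Invertible (2 : C)] [Ring A] [Algebra C A] [StarRing A] [StarModule C A]
    (D : FormalDeformation C A) (hD : D.IsHermitian) (n : ℕ)
    (U₀ : Matrix (Fin n) (Fin n) A)
    (hU₀left : U₀ᴴ * U₀ = 1) (hU₀right : U₀ * U₀ᴴ = 1) :
    ∃ U : ℕ → Matrix (Fin n) (Fin n) A, U 0 = U₀ ∧
      D.matMul n (fun m => (U m)ᴴ) U = fdOne (Matrix (Fin n) (Fin n) A) ∧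
      D.matMul n U (fun m => (U m)ᴴ) = fdOne (Matrix (Fin n) (Fin n) A) :=
  unitary_deformation_general D hD n U₀ hU₀left hU₀right
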